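/- (Lossless MLP expansion.) Let MLP(x) = W₂·σ(W₁·x + b₁) + b₂ with W₁ ∈ ℝ^{H_S×D_S}, b₁ ∈ ℝ^{H_S}, W₂ ∈ ℝ^{D_S×H_S}, b₂ ∈ ℝ^{D_S}, and σ : ℝ → ℝ applied entrywise. Let D_T ≥ D_S and H_T ≥ H_S. Construct the expanded parameters as follows: (1) let N₁ ∈ ℝ^{H_T×D_S} be the row-circular expansion of W₁ (N₁[i,:] = W₁[i mod H_S,:]) and let W₁* ∈ ℝ^{H_T×D_T} be any column-random expansion of N₁, i.e. W₁* = [N₁¹, …, N₁^{k_D}, ζ] with ∑_i N₁ⁱ = N₁ and arbitrary ζ ∈ ℝ^{H_T×r_D}, where k_D = ⌊D_T/D_S⌋ and r_D = D_T mod D_S; set b₁* = V_circ(b₁) ∈ ℝ^{H_T}; (2) let N₂ = [W₂¹, …, W₂^{k_H}, W₂^res] ∈ ℝ^{D_S×H_T} be any column-circular expansion of W₂ (with k_H = ⌊H_T/H_S⌋, r_H = H_T mod H_S, W₂^res + ∑_i W₂ⁱ[:, :r_H] = W₂[:, :r_H], and ∑_i W₂ⁱ[:, r_H:] = W₂[:,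 r_H:]), and let W₂* ∈ ℝ^{D_T×H_T} be the row-average expansion of N₂; set b₂* = V_avg(b₂) ∈ ℝ^{D_T}. Then for every x ∈ ℝ^{D_S}, W₂*·σ(W₁*·V_zero(x) + b₁*) + b₂* = V_avg(MLP(x)). -/

import Mathlib

/-- Index bound for the tail part of an expansion from dimension `DS` to `DT`. -/
theorem sub_lt_mod (DS DT i : ℕ) (hDS : 0 < DS) (hi : i < DT) (h2 : DT / DS * DS ≤ i) :
    i - DT / DS * DS < DT % DS := by
  have h := Nat.div_add_mod' DT DS
  set m := DT / DS * DS
  omega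

/-- Average expansion `V_avg` from `ℝ^{DS}` to `ℝ^{DT}`. -/
noncomputable def vAvg (DS DT : ℕ) (hDS : 0 < DS) (x : Fin DS → ℝ) : Fin DT → ℝ :=
  fun i => if i.val < DT / DS * DS then x ⟨i.val % DS, Nat.mod_lt _ hDS⟩
           else (∑ j, x j) / (DS : ℝ)

/-- Zero expansion `V_zero` from `ℝ^{DS}` to `ℝ^{DT}`. -/
def vZero (DS DT : ℕ) (hDS : 0 < DS) (x : Fin DS → ℝ) : Fin DT → ℝ :=
  fun i => if i.val < DT / DS * DS then x ⟨i.val % DS, Nat.mod_lt _ hDS⟩ else 0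

/-- Circular expansion `V_circ` from `ℝ^{DS}` to `ℝ^{DT}`. -/
def vCirc (DS DT : ℕ) (hDS : 0 < DS) (x : Fin DS → ℝ) : Fin DT → ℝ :=
  fun i => x ⟨i.val % DS, Nat.mod_lt _ hDS⟩

/-- Mean of a vector. -/
noncomputable def meanV {D : ℕ} (x : Fin D → ℝ) : ℝ := (∑ i, x i) / (D : ℝ)

/-- Population variance of a vector. -/
noncomputable def varV {D : ℕ} (x : Fin D → ℝ) : ℝ := (∑ i, (x i - meanV x) ^ 2) / (D : ℝ)

/-- Matrix row-circular expansion: `N[i,:] = M[i mod H_S,:]` for all rows. -/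
def rowCirc (HS HT P : ℕ) (hHS : 0 < HS) (M : Matrix (Fin HS) (Fin P) ℝ) :
    Matrix (Fin HT) (Fin P) ℝ :=
  fun i j => M ⟨i.val % HS, Nat.mod_lt _ hHS⟩ j

/-- Matrix row-average expansion: repeat the rows of `N` cyclically for the first
`⌊D_T/D_S⌋·D_S` rows and fill the remaining rows with the row average of `N`. -/
noncomputable def rowAvg (DS DT P : ℕ) (hDS : 0 < DS) (N : Matrix (Fin DS) (Fin P) ℝ) :
    Matrix (Fin DT) (Fin P) ℝ :=
  fun i j => if i.val < DT / DS * DS then N ⟨i.val % DS, Nat.mod_lt _ hDS⟩ j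
             else (∑ l, N l j) / (DS : ℝ)

/-- Matrix column-random expansion: horizontal concatenation
`[M¹, …, M^k, ζ]` of `k = ⌊D_T/D_S⌋` blocks and an arbitrary block `ζ`. -/
noncomputable def colRand (DS DT P : ℕ) (hDS : 0 < DS)
    (Ms : Fin (DT / DS) → Matrix (Fin P) (Fin DS) ℝ)
    (Z : Matrix (Fin P) (Fin (DT % DS)) ℝ) : Matrix (Fin P) (Fin DT) ℝ :=
  fun i j => if h : j.val < DT / DS * DS
    then Ms ⟨j.val / DS, (Nat.div_lt_iff_lt_mul hDS).mpr h⟩ i ⟨j.val % DS, Nat.mod_lt _ hDS⟩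
    else Z i ⟨j.val - DT / DS * DS, sub_lt_mod DS DT j.val hDS j.isLt (not_lt.mp h)⟩

/-- Matrix column-circular expansion: horizontal concatenation
`[M¹, …, M^k, M^res]` of `k = ⌊H_T/H_S⌋` blocks and a residual block. -/
noncomputable def colCirc (HS HT P : ℕ) (hHS : 0 < HS)
    (Ms : Fin (HT / HS) → Matrix (Fin P) (Fin HS) ℝ)
    (Mres : Matrix (Fin P) (Fin (HT % HS)) ℝ) : Matrix (Fin P) (Fin HT) ℝ :=
  fun i j => if h : j.val < HT / HS * HS
    then Ms ⟨j.val / HS, (Nat.div_lt_iff_lt_mul hHS).mpr h⟩ i ⟨j.val % HS, Nat.mod_lt _ hHS⟩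
    else Mres i ⟨j.val - HT / HS * HS, sub_lt_mod HS HT j.val hHS j.isLt (not_lt.mp h)⟩

/-!
Index `Fin D_T` as `⌊D_T / D_S⌋` blocks of length `D_S` followed by a tail of length
`D_T mod D_S` (`finDivModEquiv`). Against `V_zero(x)` the tail columns of `W₁*` drop out and
its blocks add up to the row-circular expansion of `W₁`, so the hidden pre-activation is
`V_circ(W₁ x + b₁)`, and `σ` commutes with `V_circ`. Against a circular vector the blocks and
the residual of the column-circular expansion recombine to `W₂`. Finally the row-average
expansion satisfies `rowAvg N *ᵥ v = V_avg(N *ᵥ v)` and `V_avg` is additive.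
-/

open Matrix

def finDivModEquiv (N n : ℕ) : Fin (N / n) × Fin n ⊕ Fin (N % n) ≃ Fin N :=
  (Equiv.sumCongr finProdFinEquiv (Equiv.refl _)).trans
    (finSumFinEquiv.trans (finCongr (Nat.div_add_mod' N n)))

section finDivModEquiv

variable {N n : ℕ}

@[simp]
theorem finDivModEquiv_inl_val (l : Fin (N / n)) (m : Fin n) :
    (finDivModEquiv N n (.inl (l, m)) : ℕ) = m + n * l := rfl

@[simp]
theorem finDivModEquiv_inr_val (t : Fin (N % n)) :
    (finDivModEquiv N n (.inr t) : ℕ) = N / n * n + t := rfl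

theorem finDivModEquiv_inl_lt (l : Fin (N / n)) (m : Fin n) :
    (finDivModEquiv N n (.inl (l, m)) : ℕ) < N / n * n :=
  (finProdFinEquiv (l, m)).isLt

theorem finDivModEquiv_inl_div (l : Fin (N / n)) (m : Fin n) :
    (finDivModEquiv N n (.inl (l, m)) : ℕ) / n = l := by
  rw [finDivModEquiv_inl_val, Nat.add_mul_div_left _ _ m.pos, Nat.div_eq_of_lt m.isLt, zero_add]

theorem finDivModEquiv_inl_mod (l : Fin (N / n)) (m : Fin n) :
    (finDivModEquiv N n (.inl (l, m)) : ℕ) % n = m := by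
  rw [finDivModEquiv_inl_val, Nat.add_mul_mod_self_left, Nat.mod_eq_of_lt m.isLt]

theorem finDivModEquiv_inr_not_lt (t : Fin (N % n)) :
    ¬ (finDivModEquiv N n (.inr t) : ℕ) < N / n * n := by
  simp

theorem finDivModEquiv_inr_sub (t : Fin (N % n)) :
    (finDivModEquiv N n (.inr t) : ℕ) - N / n * n = t := by
  simp

theorem finDivModEquiv_inr_mod (hn : 0 < n) (t : Fin (N % n)) :
    (finDivModEquiv N n (.inr t) : ℕ) % n = t := by
  rw [finDivModEquiv_inr_val, Nat.mul_comm, Nat.mul_add_mod,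
    Nat.mod_eq_of_lt (t.isLt.trans (Nat.mod_lt N hn))]

end finDivModEquiv

theorem sum_finDivModEquiv {M : Type*} [AddCommMonoid M] (N n : ℕ) (f : Fin N → M) :
    ∑ j, f j = ∑ l, ∑ m, f (finDivModEquiv N n (.inl (l, m)))
      + ∑ t, f (finDivModEquiv N n (.inr t)) := by
  rw [← (finDivModEquiv N n).sum_comp, Fintype.sum_sum_type, Fintype.sum_prod_type]

theorem Fin.sum_univ_castLE_of_eq_zero {M : Type*} [AddCommMonoid M] {r n : ℕ} (h : r ≤ n)
    (f : Fin n → M) (hf : ∀ m : Fin n, r ≤ m → f m = 0) :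
    ∑ t : Fin r, f (Fin.castLE h t) = ∑ m, f m := by
  change ∑ t, f (Fin.castLEEmb h t) = _
  rw [← Finset.sum_map Finset.univ (Fin.castLEEmb h) f]
  refine Finset.sum_subset (Finset.subset_univ _) fun m _ hm => hf m ?_
  by_contra! hlt
  exact hm (Finset.mem_map.mpr ⟨⟨m, hlt⟩, Finset.mem_univ _, rfl⟩)

section ZeroAndAverageExpansions

variable {DS DT P : ℕ} (hDS : 0 < DS)

@[simp]
theorem colRand_inl (Ms : Fin (DT / DS) → Matrix (Fin P) (Fin DS) ℝ)
    (Z : Matrix (Fin P) (Fin (DT % DS)) ℝ) (i : Fin P) (l : Fin (DT / DS)) (m : Fin DS) :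
    colRand DS DT P hDS Ms Z i (finDivModEquiv DT DS (.inl (l, m))) = Ms l i m := by
  rw [colRand, dif_pos (finDivModEquiv_inl_lt l m)]
  congr <;> simp only [finDivModEquiv_inl_div, finDivModEquiv_inl_mod]

@[simp]
theorem colRand_inr (Ms : Fin (DT / DS) → Matrix (Fin P) (Fin DS) ℝ)
    (Z : Matrix (Fin P) (Fin (DT % DS)) ℝ) (i : Fin P) (t : Fin (DT % DS)) :
    colRand DS DT P hDS Ms Z i (finDivModEquiv DT DS (.inr t)) = Z i t := by
  rw [colRand, dif_neg (finDivModEquiv_inr_not_lt t)]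
  congr
  simp only [finDivModEquiv_inr_sub]

@[simp]
theorem vZero_inl (x : Fin DS → ℝ) (l : Fin (DT / DS)) (m : Fin DS) :
    vZero DS DT hDS x (finDivModEquiv DT DS (.inl (l, m))) = x m := by
  rw [vZero, if_pos (finDivModEquiv_inl_lt l m)]
  congr
  simp only [finDivModEquiv_inl_mod]

@[simp]
theorem vZero_inr (x : Fin DS → ℝ) (t : Fin (DT % DS)) :
    vZero DS DT hDS x (finDivModEquiv DT DS (.inr t)) = 0 :=
  if_neg (finDivModEquiv_inr_not_lt t)

theorem colRand_mulVec_vZero (Ms : Fin (DT / DS) → Matrix (Fin P) (Fin DS) ℝ)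
    (Z : Matrix (Fin P) (Fin (DT % DS)) ℝ) (x : Fin DS → ℝ) :
    colRand DS DT P hDS Ms Z *ᵥ vZero DS DT hDS x = (∑ l, Ms l) *ᵥ x := by
  ext i
  simp only [Matrix.mulVec, dotProduct, Matrix.sum_apply, Finset.sum_mul]
  rw [sum_finDivModEquiv DT DS, Finset.sum_comm]
  simp

theorem rowAvg_mulVec (N : Matrix (Fin DS) (Fin P) ℝ) (v : Fin P → ℝ) :
    rowAvg DS DT P hDS N *ᵥ v = vAvg DS DT hDS (N *ᵥ v) := by
  ext i
  simp only [rowAvg, vAvg, Matrix.mulVec, dotProduct]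
  split_ifs
  · rfl
  · simp only [div_mul_eq_mul_div, Finset.sum_mul, ← Finset.sum_div]
    rw [Finset.sum_comm]

theorem vAvg_add (x y : Fin DS → ℝ) :
    vAvg DS DT hDS (x + y) = vAvg DS DT hDS x + vAvg DS DT hDS y := by
  ext i
  simp only [vAvg, Pi.add_apply]
  split_ifs
  · rfl
  · rw [Finset.sum_add_distrib, add_div]

end ZeroAndAverageExpansions

section CircularExpansions

variable {HS HT P : ℕ} (hHS : 0 < HS)

@[simp]
theorem colCirc_inl (Ms : Fin (HT / HS) → Matrix (Fin P) (Fin HS) ℝ)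
    (Mres : Matrix (Fin P) (Fin (HT % HS)) ℝ) (i : Fin P) (l : Fin (HT / HS)) (m : Fin HS) :
    colCirc HS HT P hHS Ms Mres i (finDivModEquiv HT HS (.inl (l, m))) = Ms l i m := by
  rw [colCirc, dif_pos (finDivModEquiv_inl_lt l m)]
  congr <;> simp only [finDivModEquiv_inl_div, finDivModEquiv_inl_mod]

@[simp]
theorem colCirc_inr (Ms : Fin (HT / HS) → Matrix (Fin P) (Fin HS) ℝ)
    (Mres : Matrix (Fin P) (Fin (HT % HS)) ℝ) (i : Fin P) (t : Fin (HT % HS)) :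
    colCirc HS HT P hHS Ms Mres i (finDivModEquiv HT HS (.inr t)) = Mres i t := by
  rw [colCirc, dif_neg (finDivModEquiv_inr_not_lt t)]
  congr
  simp only [finDivModEquiv_inr_sub]

@[simp]
theorem vCirc_inl (u : Fin HS → ℝ) (l : Fin (HT / HS)) (m : Fin HS) :
    vCirc HS HT hHS u (finDivModEquiv HT HS (.inl (l, m))) = u m := by
  rw [vCirc]
  congr
  simp only [finDivModEquiv_inl_mod]

@[simp]
theorem vCirc_inr (u : Fin HS → ℝ) (t : Fin (HT % HS)) :
    vCirc HS HT hHS u (finDivModEquiv HT HS (.inr t))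
      = u (Fin.castLE (Nat.mod_lt HT hHS).le t) := by
  rw [vCirc]
  congr
  simp only [finDivModEquiv_inr_mod hHS]

theorem rowCirc_mulVec (M : Matrix (Fin HS) (Fin P) ℝ) (x : Fin P → ℝ) :
    rowCirc HS HT P hHS M *ᵥ x = vCirc HS HT hHS (M *ᵥ x) := rfl

theorem colCirc_mulVec_vCirc (Ms : Fin (HT / HS) → Matrix (Fin P) (Fin HS) ℝ)
    (Mres : Matrix (Fin P) (Fin (HT % HS)) ℝ) (W : Matrix (Fin P) (Fin HS) ℝ)
    (hres : ∀ (i : Fin P) (j : Fin (HT % HS)),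
      Mres i j + ∑ l, Ms l i (Fin.castLE (Nat.mod_lt HT hHS).le j)
        = W i (Fin.castLE (Nat.mod_lt HT hHS).le j))
    (hrest : ∀ (i : Fin P) (j : Fin HS), HT % HS ≤ j.val → ∑ l, Ms l i j = W i j)
    (u : Fin HS → ℝ) :
    colCirc HS HT P hHS Ms Mres *ᵥ vCirc HS HT hHS u = W *ᵥ u := by
  ext i
  have hMres (t : Fin (HT % HS)) : Mres i t = W i (Fin.castLE (Nat.mod_lt HT hHS).le t)
      - ∑ l, Ms l i (Fin.castLE (Nat.mod_lt HT hHS).le t) :=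
    eq_sub_of_add_eq (hres i t)
  have htail : ∑ t : Fin (HT % HS), Mres i t * u (Fin.castLE (Nat.mod_lt HT hHS).le t)
      = ∑ m, (W i m - ∑ l, Ms l i m) * u m := by
    simp only [hMres]
    exact Fin.sum_univ_castLE_of_eq_zero _ (fun m => (W i m - ∑ l, Ms l i m) * u m)
      fun m hm => by rw [hrest i m hm, sub_self, zero_mul]
  simp only [Matrix.mulVec, dotProduct]
  rw [sum_finDivModEquiv HT HS, Finset.sum_comm]
  simp only [colCirc_inl, colCirc_inr, vCirc_inl, vCirc_inr, htail, ← Finset.sum_mul,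
    ← Finset.sum_add_distrib, ← add_mul, add_sub_cancel]

end CircularExpansions

theorem stmt_14_general (DS DT HS HT : ℕ) (hDS : 0 < DS)
    (hHS : 0 < HS)
    (W1 : Matrix (Fin HS) (Fin DS) ℝ) (b1 : Fin HS → ℝ)
    (W2 : Matrix (Fin DS) (Fin HS) ℝ) (b2 : Fin DS → ℝ) (σ : ℝ → ℝ)
    -- (1) column-random expansion data for the row-circular expansion of `W₁`
    (N1s : Fin (DT / DS) → Matrix (Fin HT) (Fin DS) ℝ)
    (hN1s : ∑ l, N1s l = rowCirc HS HT DS hHS W1)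
    (Z : Matrix (Fin HT) (Fin (DT % DS)) ℝ)
    -- (2) column-circular expansion data for `W₂`
    (W2s : Fin (HT / HS) → Matrix (Fin DS) (Fin HS) ℝ)
    (W2res : Matrix (Fin DS) (Fin (HT % HS)) ℝ)
    (hres : ∀ (i : Fin DS) (j : Fin (HT % HS)),
      W2res i j + ∑ l, W2s l i ⟨j.val, j.isLt.trans (Nat.mod_lt HT hHS)⟩
        = W2 i ⟨j.val, j.isLt.trans (Nat.mod_lt HT hHS)⟩)
    (hrest : ∀ (i : Fin DS) (j : Fin HS), HT % HS ≤ j.val → ∑ l, W2s l i j = W2 i j)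
    (x : Fin DS → ℝ) :
    (rowAvg DS DT HT hDS (colCirc HS HT DS hHS W2s W2res)).mulVec
        (fun i => σ (((colRand DS DT HT hDS N1s Z).mulVec (vZero DS DT hDS x)
          + vCirc HS HT hHS b1) i))
      + vAvg DS DT hDS b2
    = vAvg DS DT hDS
        (W2.mulVec (fun i => σ ((W1.mulVec x + b1) i)) + b2) := by
  set h : Fin HS → ℝ := fun i => σ ((W1 *ᵥ x + b1) i)
  have hidden : (fun i => σ ((colRand DS DT HT hDS N1s Z *ᵥ vZero DS DT hDS x
      + vCirc HS HT hHS b1) i)) = vCirc HS HT hHS h := by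
    rw [colRand_mulVec_vZero, hN1s, rowCirc_mulVec]
    rfl
  rw [hidden, rowAvg_mulVec, colCirc_mulVec_vCirc hHS W2s W2res W2 hres hrest, vAvg_add]

/-- lossless MLP expansion: with
`W₁* = colRand` of the row-circular expansion of `W₁`, `b₁* = V_circ(b₁)`,
`W₂* = rowAvg` of a column-circular expansion of `W₂`, and `b₂* = V_avg(b₂)`,
one has `W₂*·σ(W₁*·V_zero(x) + b₁*) + b₂* = V_avg(W₂·σ(W₁·x + b₁) + b₂)`. -/
theorem stmt_14 (DS DT HS HT : ℕ) (hDS : 0 < DS) (hDT : DS ≤ DT)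
    (hHS : 0 < HS) (hHT : HS ≤ HT)
    (W1 : Matrix (Fin HS) (Fin DS) ℝ) (b1 : Fin HS → ℝ)
    (W2 : Matrix (Fin DS) (Fin HS) ℝ) (b2 : Fin DS → ℝ) (σ : ℝ → ℝ)
    -- (1) column-random expansion data for the row-circular expansion of `W₁`
    (N1s : Fin (DT / DS) → Matrix (Fin HT) (Fin DS) ℝ)
    (hN1s : ∑ l, N1s l = rowCirc HS HT DS hHS W1)
    (Z : Matrix (Fin HT) (Fin (DT % DS)) ℝ)
    -- (2) column-circular expansion data for `W₂`
    (W2s : Fin (HT / HS) → Matrix (Fin DS) (Fin HS) ℝ)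
    (W2res : Matrix (Fin DS) (Fin (HT % HS)) ℝ)
    (hres : ∀ (i : Fin DS) (j : Fin (HT % HS)),
      W2res i j + ∑ l, W2s l i ⟨j.val, j.isLt.trans (Nat.mod_lt HT hHS)⟩
        = W2 i ⟨j.val, j.isLt.trans (Nat.mod_lt HT hHS)⟩)
    (hrest : ∀ (i : Fin DS) (j : Fin HS), HT % HS ≤ j.val → ∑ l, W2s l i j = W2 i j)
    (x : Fin DS → ℝ) :
    (rowAvg DS DT HT hDS (colCirc HS HT DS hHS W2s W2res)).mulVec
        (fun i => σ (((colRand DS DT HT hDS N1s Z).mulVec (vZero DS DT hDS x)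
          + vCirc HS HT hHS b1) i))
      + vAvg DS DT hDS b2
    = vAvg DS DT hDS
        (W2.mulVec (fun i => σ ((W1.mulVec x + b1) i)) + b2) :=
  stmt_14_general DS DT HS HT hDS hHS W1 b1 W2 b2 σ N1s hN1s Z W2s W2res hres hrest x
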